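/- Decryption correctness of the AA_β cryptosystem: Let d₁, d₂, v, m, k₁, k₂, a₃ be positive integers, and let e₁ = a₁ + a₂ with d₁ = a₁ - a₂ dividing e₁, and e₂ = a₁ + a₃ with a₂ + a₃ ≡ v (mod d₁). If k₂·v + m < d₁ and m < d₂ = v, then ((k₁·e₁ + k₂·e₂ + m) mod d₁) mod d₂ = m. -/

import Mathlib

/-! Modulo `d₁ = a₁ - a₂` the key `e₁` vanishes and `e₂ = a₁ + a₃ ≡ a₂ + a₃ ≡ v`, so the ciphertext
reduces to `k₂ v + m`; the size bound makes this its least residue, and reducing modulo `v`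
strips `k₂ v`. -/

namespace Int

lemma add_modEq_add_of_sub {a₁ a₂ : ℤ} (a₃ : ℤ) : a₁ + a₃ ≡ a₂ + a₃ [ZMOD a₁ - a₂] :=
  (Int.modEq_sub a₁ a₂).add_right a₃

lemma emod_eq_of_modEq {C r n : ℤ} (h : C ≡ r [ZMOD n]) (hr₀ : 0 ≤ r) (hrn : r < n) :
    C % n = r :=
  h.eq.trans (Int.emod_eq_of_lt hr₀ hrn)

lemma add_mul_emod_self_left_of_lt {m v : ℤ} (k : ℤ) (hm : 0 ≤ m) (hmv : m < v) :
    (m + v * k) % v = m := by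
  rw [Int.add_mul_emod_self_left, Int.emod_eq_of_lt hm hmv]

lemma mul_add_mul_add_modEq_of_dvd {d e₁ e₂ v : ℤ} (k₁ k₂ m : ℤ) (hdvd : d ∣ e₁)
    (he₂ : e₂ ≡ v [ZMOD d]) : k₁ * e₁ + k₂ * e₂ + m ≡ k₂ * v + m [ZMOD d] := by
  have he₁ : e₁ ≡ 0 [ZMOD d] := Int.modEq_zero_iff_dvd.mpr hdvd
  simpa using ((he₁.mul_left k₁).add (he₂.mul_left k₂)).add_right m

end Int

theorem stmt2_general (a₁ a₂ a₃ v m k₁ k₂ d₁ d₂ e₁ e₂ : ℤ)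
    (hv : 0 < v)
    (hm : 0 < m) (hk₂ : 0 < k₂)
    (hd₁ : d₁ = a₁ - a₂)
    (he₂ : e₂ = a₁ + a₃)
    (hdvd : d₁ ∣ e₁) (hcong : a₂ + a₃ ≡ v [ZMOD d₁])
    (hd₂ : d₂ = v)
    (hsize : k₂ * v + m < d₁) (hmv : m < d₂) :
    ((k₁ * e₁ + k₂ * e₂ + m) % d₁) % d₂ = m := by
  rw [hd₂] at hmv ⊢
  have he₂v : e₂ ≡ v [ZMOD d₁] := by
    rw [he₂]
    exact (hd₁ ▸ Int.add_modEq_add_of_sub a₃).trans hcong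
  have hreduce : (k₁ * e₁ + k₂ * e₂ + m) % d₁ = k₂ * v + m :=
    Int.emod_eq_of_modEq (Int.mul_add_mul_add_modEq_of_dvd k₁ k₂ m hdvd he₂v) (by positivity) hsize
  rw [hreduce, add_comm, mul_comm]
  exact Int.add_mul_emod_self_left_of_lt k₂ hm.le hmv

theorem stmt2 (a₁ a₂ a₃ v m k₁ k₂ d₁ d₂ e₁ e₂ : ℤ)
    (ha₁ : 0 < a₁) (ha₂ : 0 < a₂) (ha₃ : 0 < a₃) (hv : 0 < v)
    (hm : 0 < m) (hk₁ : 0 < k₁) (hk₂ : 0 < k₂)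
    (hd₁ : d₁ = a₁ - a₂) (hd₁pos : 0 < d₁)
    (he₁ : e₁ = a₁ + a₂) (he₂ : e₂ = a₁ + a₃)
    (hdvd : d₁ ∣ e₁) (hcong : a₂ + a₃ ≡ v [ZMOD d₁])
    (hd₂ : d₂ = v)
    (hsize : k₂ * v + m < d₁) (hmv : m < d₂) :
    ((k₁ * e₁ + k₂ * e₂ + m) % d₁) % d₂ = m :=
  stmt2_general a₁ a₂ a₃ v m k₁ k₂ d₁ d₂ e₁ e₂ hv hm hk₂ hd₁ he₂ hdvd hcong hd₂ hsize hmv
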